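/- Let c ∈ (0,√2) and p ∈ (0,1) with p > p₀. Then the one-sided limits L(c,p,θ₁−) := lim_{θ→θ₁⁻} L(c,p,θ) and L(c,p,θ₁+) := lim_{θ→θ₁⁺} L(c,p,θ) exist, and L(c,p,θ₁−) − L(c,p,θ₁+) = 1. -/
import Mathlib


open Real Filter Set

/-- `ξ = p c⁴ / 4`. -/
noncomputable def xiPar (c p : ℝ) : ℝ := p * c ^ 4 / 4

/-- `κ₁ = √((c² − √(c⁴ − 4ξ))/2)`. -/
noncomputable def kappa1 (c p : ℝ) : ℝ :=
  Real.sqrt ((c ^ 2 - Real.sqrt (c ^ 4 - 4 * xiPar c p)) / 2)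

/-- `κ₂ = √((c² + √(c⁴ − 4ξ))/2)`. -/
noncomputable def kappa2 (c p : ℝ) : ℝ :=
  Real.sqrt ((c ^ 2 + Real.sqrt (c ^ 4 - 4 * xiPar c p)) / 2)

/-- The function `L(c,p,θ)` from the paper. -/
noncomputable def Lfun (c p θ : ℝ) : ℝ :=
  (1 / 2) * (1 + kappa2 c p / kappa1 c p)
  + (1 / Real.pi) * Real.arctan
      ((kappa2 c p * (-(kappa1 c p) ^ 2 + xiPar c p + xiPar c p * θ * Real.sqrt (2 - c ^ 2))) /
       (xiPar c p * (θ * (kappa1 c p) ^ 2 + Real.sqrt (2 - c ^ 2) + θ * (1 - c ^ 2))))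
  - (kappa2 c p / (kappa1 c p * Real.pi)) * Real.arctan
      ((kappa1 c p * (-(kappa2 c p) ^ 2 + xiPar c p + xiPar c p * θ * Real.sqrt (2 - c ^ 2))) /
       (xiPar c p * (θ * (kappa2 c p) ^ 2 + Real.sqrt (2 - c ^ 2) + θ * (1 - c ^ 2))))

/-- The discontinuity point `θ₁ = −2√(2−c²)/(2−c² − c²√(1−p))`. -/
noncomputable def theta1 (c p : ℝ) : ℝ :=
  -2 * Real.sqrt (2 - c ^ 2) / (2 - c ^ 2 - c ^ 2 * Real.sqrt (1 - p))

/-- The discontinuity point `θ₂ = −2√(2−c²)/(2−c² + c²√(1−p))`. -/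
noncomputable def theta2 (c p : ℝ) : ℝ :=
  -2 * Real.sqrt (2 - c ^ 2) / (2 - c ^ 2 + c ^ 2 * Real.sqrt (1 - p))

/-- The threshold `p₀ = 4(c²−1)/c⁴`. -/
noncomputable def p0 (c : ℝ) : ℝ := 4 * (c ^ 2 - 1) / c ^ 4

/-- For `c ∈ (0,√2)`, `p ∈ (0,1)` with `p > p₀`, the one-sided limits
of `L(c,p,·)` at `θ₁` from the left and from the right exist, and their difference
is `1`. -/
theorem stmt11 (c p : ℝ) (hc : c ∈ Set.Ioo 0 (Real.sqrt 2)) (hp : p ∈ Set.Ioo 0 1)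
    (hpp : p > p0 c) :
    ∃ Lminus Lplus : ℝ,
      Filter.Tendsto (fun θ => Lfun c p θ)
        (nhdsWithin (theta1 c p) (Set.Iio (theta1 c p))) (nhds Lminus) ∧
      Filter.Tendsto (fun θ => Lfun c p θ)
        (nhdsWithin (theta1 c p) (Set.Ioi (theta1 c p))) (nhds Lplus) ∧
      Lminus - Lplus = 1 := by
  obtain ⟨hc0, hcs⟩ := hc
  obtain ⟨hp0', hp1⟩ := hp
  have hc2 : c ^ 2 < 2 := by
    have h := (Real.lt_sqrt hc0.le).mp hcs; linarith
  set q := Real.sqrt (1 - p) with hq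
  have hq2 : q ^ 2 = 1 - p := Real.sq_sqrt (by linarith)
  have hq0 : 0 < q := Real.sqrt_pos.mpr (by linarith)
  have hq1 : q < 1 := by nlinarith
  set m := Real.sqrt (2 - c ^ 2) with hm
  have hm2 : m ^ 2 = 2 - c ^ 2 := Real.sq_sqrt (by linarith)
  have hm0 : 0 < m := Real.sqrt_pos.mpr (by linarith)
  have hxpos : 0 < xiPar c p := by unfold xiPar; positivity
  have hcq : 0 < c ^ 2 * q := by positivity
  have hkey : c ^ 2 * q < 2 - c ^ 2 := by
    have hc4 : (0:ℝ) < c ^ 4 := by positivity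
    have h1 : 4 * (c ^ 2 - 1) < p * c ^ 4 := by
      have h := hpp; unfold p0 at h; exact (div_lt_iff₀ hc4).mp h
    have h2 : (c ^ 2 * q) ^ 2 < (2 - c ^ 2) ^ 2 := by nlinarith
    exact lt_of_pow_lt_pow_left₀ 2 (by linarith) h2
  have hsqD : Real.sqrt (c ^ 4 - 4 * xiPar c p) = c ^ 2 * q := by
    have h : c ^ 4 - 4 * xiPar c p = (c ^ 2 * q) ^ 2 := by
      unfold xiPar; nlinarith
    rw [h, Real.sqrt_sq (by positivity)]
  have hk1sq : (kappa1 c p) ^ 2 = (c ^ 2 - c ^ 2 * q) / 2 := by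
    unfold kappa1; rw [hsqD, Real.sq_sqrt]; nlinarith
  have hk2sq : (kappa2 c p) ^ 2 = (c ^ 2 + c ^ 2 * q) / 2 := by
    unfold kappa2; rw [hsqD, Real.sq_sqrt]; positivity
  have hk1pos : 0 < kappa1 c p := by
    unfold kappa1; rw [hsqD]; apply Real.sqrt_pos.mpr; nlinarith
  have hk2pos : 0 < kappa2 c p := by
    unfold kappa2; rw [hsqD]; apply Real.sqrt_pos.mpr; positivity
  set s : ℝ := (2 - c ^ 2 - c ^ 2 * q) / 2 with hsdef
  have hs : 0 < s := by rw [hsdef]; linarith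
  have hth : theta1 c p = -m / s := by
    unfold theta1; rw [← hq, ← hm, hsdef]
    rw [div_eq_div_iff (by linarith) (by linarith)]
    ring
  have hts : theta1 c p * s = -m := by
    rw [hth, div_mul_cancel₀ _ hs.ne']
  have hsum : (kappa1 c p) ^ 2 + 1 - c ^ 2 = s := by rw [hk1sq, hsdef]; ring
  have hsum2 : (kappa2 c p) ^ 2 + 1 - c ^ 2 = s + c ^ 2 * q := by
    rw [hk2sq, hsdef]; ring
  -- the first denominator as a linear function vanishing at θ₁
  have hD1 : ∀ θ : ℝ, xiPar c p * (θ * (kappa1 c p) ^ 2 + m + θ * (1 - c ^ 2))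
      = (xiPar c p * s) * (θ - theta1 c p) := by
    intro θ
    linear_combination (xiPar c p * θ) * hsum + xiPar c p * hts
  -- the first numerator is negative at θ₁
  have hNs : (-(kappa1 c p) ^ 2 + xiPar c p + xiPar c p * theta1 c p * m) * s
      = -((kappa1 c p) ^ 2 * s) + xiPar c p * (s - m ^ 2) := by
    linear_combination (xiPar c p * m) * hts
  have hsm : s - m ^ 2 < 0 := by rw [hsdef, hm2]; linarith
  have hNin : -(kappa1 c p) ^ 2 + xiPar c p + xiPar c p * theta1 c p * m < 0 := by
    have h1 : (-(kappa1 c p) ^ 2 + xiPar c p + xiPar c p * theta1 c p * m) * s < 0 := by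
      rw [hNs]
      have a1 := mul_pos (pow_pos hk1pos 2) hs
      have a2 := mul_neg_of_pos_of_neg hxpos hsm
      linarith
    have h2 := div_neg_of_neg_of_pos h1 hs
    rwa [mul_div_cancel_right₀ _ hs.ne'] at h2
  have hNneg : kappa2 c p * (-(kappa1 c p) ^ 2 + xiPar c p + xiPar c p * theta1 c p * m) < 0 :=
    mul_neg_of_pos_of_neg hk2pos hNin
  -- the second denominator is negative (hence nonzero) at θ₁
  have hD2in : (theta1 c p * (kappa2 c p) ^ 2 + m + theta1 c p * (1 - c ^ 2)) * s
      = -(m * (c ^ 2 * q)) := by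
    linear_combination (theta1 c p * s) * hsum2 + (s + c ^ 2 * q) * hts
  have hD2neg : xiPar c p * (theta1 c p * (kappa2 c p) ^ 2 + m + theta1 c p * (1 - c ^ 2)) < 0 := by
    have h1 : (theta1 c p * (kappa2 c p) ^ 2 + m + theta1 c p * (1 - c ^ 2)) * s < 0 := by
      rw [hD2in]
      have := mul_pos hm0 hcq
      linarith
    have h2 : theta1 c p * (kappa2 c p) ^ 2 + m + theta1 c p * (1 - c ^ 2) < 0 := by
      have h2 := div_neg_of_neg_of_pos h1 hs
      rwa [mul_div_cancel_right₀ _ hs.ne'] at h2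
    exact mul_neg_of_pos_of_neg hxpos h2
  have hKpos : 0 < xiPar c p * s := mul_pos hxpos hs
  -- continuity of the numerator of the first fraction
  have hNt : ∀ l ≤ nhds (theta1 c p),
      Tendsto (fun θ : ℝ => kappa2 c p * (-(kappa1 c p) ^ 2 + xiPar c p + xiPar c p * θ * m)) l
        (nhds (kappa2 c p * (-(kappa1 c p) ^ 2 + xiPar c p + xiPar c p * theta1 c p * m))) := by
    intro l hl
    apply Tendsto.mono_left _ hl
    exact Continuous.tendsto (by fun_prop) (theta1 c p)
  -- ratio in the first arctan tends to +∞ from the left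
  have hrat1 : Tendsto (fun θ : ℝ =>
      (kappa2 c p * (-(kappa1 c p) ^ 2 + xiPar c p + xiPar c p * θ * m)) /
        (xiPar c p * (θ * (kappa1 c p) ^ 2 + m + θ * (1 - c ^ 2))))
      (nhdsWithin (theta1 c p) (Set.Iio (theta1 c p))) atTop := by
    have heq : (fun θ : ℝ =>
        (kappa2 c p * (-(kappa1 c p) ^ 2 + xiPar c p + xiPar c p * θ * m)) /
          (xiPar c p * (θ * (kappa1 c p) ^ 2 + m + θ * (1 - c ^ 2))))
        = fun θ => (kappa2 c p * (-(kappa1 c p) ^ 2 + xiPar c p + xiPar c p * θ * m)) /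
          ((xiPar c p * s) * (θ - theta1 c p)) := by
      funext θ; rw [hD1 θ]
    rw [heq]
    have hinv : Tendsto (fun θ : ℝ => (-((xiPar c p * s) * (θ - theta1 c p)))⁻¹)
        (nhdsWithin (theta1 c p) (Set.Iio (theta1 c p))) atTop := by
      apply tendsto_inv_nhdsGT_zero.comp
      apply tendsto_nhdsWithin_of_tendsto_nhds_of_eventually_within
      · apply Tendsto.mono_left _ nhdsWithin_le_nhds
        have h0 : Tendsto (fun θ : ℝ => -((xiPar c p * s) * (θ - theta1 c p)))
            (nhds (theta1 c p)) (nhds (-((xiPar c p * s) * (theta1 c p - theta1 c p)))) :=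
          Continuous.tendsto (by fun_prop) (theta1 c p)
        simpa using h0
      · filter_upwards [self_mem_nhdsWithin] with θ hθ
        have : θ - theta1 c p < 0 := sub_neg.mpr hθ
        exact mem_Ioi.mpr (neg_pos.mpr (mul_neg_of_pos_of_neg hKpos this))
    have hmul := Filter.Tendsto.pos_mul_atTop (neg_pos.mpr hNneg)
      ((hNt _ nhdsWithin_le_nhds).neg) hinv
    refine hmul.congr fun θ => ?_
    rw [inv_neg, neg_mul_neg, ← div_eq_mul_inv]
  -- ratio in the first arctan tends to −∞ from the right
  have hrat2 : Tendsto (fun θ : ℝ =>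
      (kappa2 c p * (-(kappa1 c p) ^ 2 + xiPar c p + xiPar c p * θ * m)) /
        (xiPar c p * (θ * (kappa1 c p) ^ 2 + m + θ * (1 - c ^ 2))))
      (nhdsWithin (theta1 c p) (Set.Ioi (theta1 c p))) atBot := by
    have heq : (fun θ : ℝ =>
        (kappa2 c p * (-(kappa1 c p) ^ 2 + xiPar c p + xiPar c p * θ * m)) /
          (xiPar c p * (θ * (kappa1 c p) ^ 2 + m + θ * (1 - c ^ 2))))
        = fun θ => (kappa2 c p * (-(kappa1 c p) ^ 2 + xiPar c p + xiPar c p * θ * m)) /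
          ((xiPar c p * s) * (θ - theta1 c p)) := by
      funext θ; rw [hD1 θ]
    rw [heq]
    have hinv : Tendsto (fun θ : ℝ => ((xiPar c p * s) * (θ - theta1 c p))⁻¹)
        (nhdsWithin (theta1 c p) (Set.Ioi (theta1 c p))) atTop := by
      apply tendsto_inv_nhdsGT_zero.comp
      apply tendsto_nhdsWithin_of_tendsto_nhds_of_eventually_within
      · apply Tendsto.mono_left _ nhdsWithin_le_nhds
        have h0 : Tendsto (fun θ : ℝ => (xiPar c p * s) * (θ - theta1 c p))
            (nhds (theta1 c p)) (nhds ((xiPar c p * s) * (theta1 c p - theta1 c p))) :=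
          Continuous.tendsto (by fun_prop) (theta1 c p)
        simpa using h0
      · filter_upwards [self_mem_nhdsWithin] with θ hθ
        have : 0 < θ - theta1 c p := sub_pos.mpr hθ
        exact mem_Ioi.mpr (mul_pos hKpos this)
    have hmul := Filter.Tendsto.neg_mul_atTop hNneg (hNt _ nhdsWithin_le_nhds) hinv
    refine hmul.congr fun θ => ?_
    rw [← div_eq_mul_inv]
  -- the second arctan term is continuous at θ₁
  have hcont2 : Tendsto (fun θ : ℝ =>
      (kappa2 c p / (kappa1 c p * Real.pi)) * Real.arctan
        ((kappa1 c p * (-(kappa2 c p) ^ 2 + xiPar c p + xiPar c p * θ * m)) /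
          (xiPar c p * (θ * (kappa2 c p) ^ 2 + m + θ * (1 - c ^ 2)))))
      (nhds (theta1 c p))
      (nhds ((kappa2 c p / (kappa1 c p * Real.pi)) * Real.arctan
        ((kappa1 c p * (-(kappa2 c p) ^ 2 + xiPar c p + xiPar c p * theta1 c p * m)) /
          (xiPar c p * (theta1 c p * (kappa2 c p) ^ 2 + m + theta1 c p * (1 - c ^ 2)))))) := by
    have hca : ContinuousAt (fun θ : ℝ =>
        (kappa1 c p * (-(kappa2 c p) ^ 2 + xiPar c p + xiPar c p * θ * m)) /
          (xiPar c p * (θ * (kappa2 c p) ^ 2 + m + θ * (1 - c ^ 2)))) (theta1 c p) := by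
      apply ContinuousAt.div
      · exact Continuous.continuousAt (by fun_prop)
      · exact Continuous.continuousAt (by fun_prop)
      · exact hD2neg.ne
    exact (continuousAt_const.mul (Real.continuous_arctan.continuousAt.comp hca)).tendsto
  refine ⟨(1 / 2) * (1 + kappa2 c p / kappa1 c p) + (1 / Real.pi) * (Real.pi / 2)
      - (kappa2 c p / (kappa1 c p * Real.pi)) * Real.arctan
        ((kappa1 c p * (-(kappa2 c p) ^ 2 + xiPar c p + xiPar c p * theta1 c p * m)) /
          (xiPar c p * (theta1 c p * (kappa2 c p) ^ 2 + m + theta1 c p * (1 - c ^ 2)))),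
    (1 / 2) * (1 + kappa2 c p / kappa1 c p) + (1 / Real.pi) * (-(Real.pi / 2))
      - (kappa2 c p / (kappa1 c p * Real.pi)) * Real.arctan
        ((kappa1 c p * (-(kappa2 c p) ^ 2 + xiPar c p + xiPar c p * theta1 c p * m)) /
          (xiPar c p * (theta1 c p * (kappa2 c p) ^ 2 + m + theta1 c p * (1 - c ^ 2)))),
    ?_, ?_, ?_⟩
  · simp only [Lfun, ← hm]
    refine Filter.Tendsto.sub (Filter.Tendsto.add tendsto_const_nhds ?_)
      (hcont2.mono_left nhdsWithin_le_nhds)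
    exact Filter.Tendsto.const_mul _
      ((Real.tendsto_arctan_atTop.mono_right nhdsWithin_le_nhds).comp hrat1)
  · simp only [Lfun, ← hm]
    refine Filter.Tendsto.sub (Filter.Tendsto.add tendsto_const_nhds ?_)
      (hcont2.mono_left nhdsWithin_le_nhds)
    exact Filter.Tendsto.const_mul _
      ((Real.tendsto_arctan_atBot.mono_right nhdsWithin_le_nhds).comp hrat2)
  · have hpi := Real.pi_ne_zero
    field_simp
    ring
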